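/- arXiv:1509.08100 — 3 statements merged into one kernel-verified Lean document; each statement's English description precedes it below -/
import Mathlib

section
/- Let d be an MPT density with tail index γ and tail constant C_d, with cdf D. Then the function h(x) = x^γ·(1 − D(x)) is strictly increasing on (0, ∞). -/
/-!
For `θ > 1` the likelihood ratio `s ↦ d s / d (θ * s)` is strictly increasing on `(0, ∞)`,
and the tail condition makes it tend to `θ ^ (γ + 1)`; hence `d s < θ ^ (γ + 1) * d (θ * s)` for all
`s > 0`. Integrating over `(x, ∞)` and substituting `t = θ * s` gives
`x ^ γ * (1 - D x) < (θ * x) ^ γ * (1 - D (θ * x))`.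
-/

open MeasureTheory Filter

/-- Cumulative distribution function of a density `d` with respect to Lebesgue measure. -/
noncomputable def cdf (d : ℝ → ℝ) (x : ℝ) : ℝ := ∫ t in Set.Iic x, d t

/-- A monotone polynomial tail (MPT) density with tail index `γ` and tail constant `Cd`:
a probability density function that is even (or supported on the nonnegative half-line),
strictly positive on `(0, ∞)`, satisfies `d x * x ^ (γ + 1) → Cd` as `x → ∞`, and has a
monotone likelihood ratio: for every `θ > 1`, `x ↦ d (x / θ) / d x` is strictly increasing
on `(0, ∞)`. -/
structure IsMPT (d : ℝ → ℝ) (γ Cd : ℝ) : Prop where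
  gamma_pos : 0 < γ
  Cd_pos : 0 < Cd
  nonneg : ∀ x, 0 ≤ d x
  integrable : Integrable d
  integral_one : ∫ x, d x = 1
  even_or_halfline : (∀ x, d (-x) = d x) ∨ (∀ x < 0, d x = 0)
  pos : ∀ x, 0 < x → 0 < d x
  tail : Tendsto (fun x => d x * x ^ (γ + 1)) atTop (nhds Cd)
  mlr : ∀ θ : ℝ, 1 < θ → StrictMonoOn (fun x => d (x / θ) / d x) (Set.Ioi 0)

open Set Topology

theorem StrictMonoOn.lt_of_tendsto_atTop {α β : Type*} [LinearOrder α] [NoMaxOrder α]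
    [Preorder β] [TopologicalSpace β] [OrderClosedTopology β] {f : α → β} {a : α} {L : β}
    (hf : StrictMonoOn f (Ioi a)) (hL : Tendsto f atTop (𝓝 L)) {s : α} (hs : a < s) :
    f s < L := by
  have : Nonempty α := ⟨s⟩
  obtain ⟨s', hss'⟩ := exists_gt s
  calc f s < f s' := hf hs (hs.trans hss') hss'
    _ ≤ L := ge_of_tendsto hL <| by
      filter_upwards [eventually_gt_atTop s'] with u hu
      exact (hf (hs.trans hss') (hs.trans (hss'.trans hu)) hu).le

theorem setIntegral_lt_setIntegral_of_forall_lt {X : Type*} [MeasurableSpace X] {μ : Measure X}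
    {s : Set X} {f g : X → ℝ} (hs : MeasurableSet s) (hμs : μ s ≠ 0)
    (hf : IntegrableOn f s μ) (hg : IntegrableOn g s μ) (hlt : ∀ x ∈ s, f x < g x) :
    ∫ x in s, f x ∂μ < ∫ x in s, g x ∂μ := by
  have hsupport : Function.support (fun x => g x - f x) ∩ s = s :=
    inter_eq_right.mpr fun x hx => (sub_pos.2 (hlt x hx)).ne'
  have hpos : 0 < ∫ x in s, (g x - f x) ∂μ := by
    rw [setIntegral_pos_iff_support_of_nonneg_ae (f := fun x => g x - f x) ?_ (hg.sub hf),
      hsupport]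
    · exact pos_iff_ne_zero.mpr hμs
    · exact (ae_restrict_iff' hs).mpr (ae_of_all _ fun x hx => (sub_pos.2 (hlt x hx)).le)
  rwa [integral_sub hg hf, sub_pos] at hpos

theorem one_sub_cdf_eq_integral_Ioi {d : ℝ → ℝ} (hd : Integrable d) (hd1 : ∫ x, d x = 1)
    (x : ℝ) : 1 - cdf d x = ∫ t in Ioi x, d t := by
  rw [← hd1, ← intervalIntegral.integral_Iic_add_Ioi hd.integrableOn hd.integrableOn, cdf,
    add_sub_cancel_left]

namespace IsMPT

variable {d : ℝ → ℝ} {γ Cd : ℝ}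

theorem strictMonoOn_div_comp_mul (h : IsMPT d γ Cd) {θ : ℝ} (hθ : 1 < θ) :
    StrictMonoOn (fun s => d s / d (θ * s)) (Ioi 0) := by
  have hθ0 : 0 < θ := one_pos.trans hθ
  have := (h.mlr θ hθ).comp ((strictMono_mul_left_of_pos hθ0).strictMonoOn (Ioi 0))
    fun _ hs => mul_pos hθ0 hs
  simpa only [Function.comp_def, mul_div_cancel_left₀ _ hθ0.ne'] using this

theorem tendsto_div_comp_mul (h : IsMPT d γ Cd) {θ : ℝ} (hθ : 0 < θ) :
    Tendsto (fun s => d s / d (θ * s)) atTop (𝓝 (θ ^ (γ + 1))) := by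
  have hscaled : Tendsto (fun s => d (θ * s) * (θ * s) ^ (γ + 1)) atTop (𝓝 Cd) :=
    h.tail.comp (tendsto_id.const_mul_atTop hθ)
  have hquot := (h.tail.div hscaled h.Cd_pos.ne').mul_const (θ ^ (γ + 1))
  rw [div_self h.Cd_pos.ne', one_mul] at hquot
  refine hquot.congr' ?_
  filter_upwards [eventually_gt_atTop 0] with s hs
  have hds := h.pos s hs
  have hdθs := h.pos (θ * s) (mul_pos hθ hs)
  have hsγ := Real.rpow_pos_of_pos hs (γ + 1)
  have hθγ := Real.rpow_pos_of_pos hθ (γ + 1)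
  rw [Pi.div_apply, Real.mul_rpow hθ.le hs.le]
  field_simp

theorem lt_rpow_mul_comp_mul (h : IsMPT d γ Cd) {θ : ℝ} (hθ : 1 < θ) {s : ℝ} (hs : 0 < s) :
    d s < θ ^ (γ + 1) * d (θ * s) := by
  have hθ0 : 0 < θ := one_pos.trans hθ
  have := (h.strictMonoOn_div_comp_mul hθ).lt_of_tendsto_atTop (h.tendsto_div_comp_mul hθ0) hs
  rwa [div_lt_iff₀ (h.pos _ (mul_pos hθ0 hs))] at this

theorem integral_Ioi_lt_rpow_mul (h : IsMPT d γ Cd) {θ : ℝ} (hθ : 1 < θ) {x : ℝ} (hx : 0 < x) :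
    ∫ t in Ioi x, d t < θ ^ γ * ∫ t in Ioi (θ * x), d t := by
  have hθ0 : 0 < θ := one_pos.trans hθ
  calc ∫ t in Ioi x, d t < ∫ t in Ioi x, θ ^ (γ + 1) * d (θ * t) :=
        setIntegral_lt_setIntegral_of_forall_lt measurableSet_Ioi (by simp)
          h.integrable.integrableOn
          ((h.integrable.comp_mul_left' hθ0.ne').integrableOn.const_mul _)
          fun t ht => h.lt_rpow_mul_comp_mul hθ (hx.trans ht)
    _ = θ ^ γ * ∫ t in Ioi (θ * x), d t := by
        rw [integral_const_mul, integral_comp_mul_left_Ioi _ _ hθ0, smul_eq_mul,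
          Real.rpow_add hθ0, Real.rpow_one]
        field_simp

end IsMPT

/-- Proposition 1(2): for an MPT density `d` with cdf `D`, `h x = x ^ γ * (1 - D x)` is
strictly increasing on `(0, ∞)`. -/
theorem mpt_h_strictMonoOn (d : ℝ → ℝ) (γ Cd : ℝ) (h : IsMPT d γ Cd) :
    StrictMonoOn (fun x => x ^ γ * (1 - cdf d x)) (Set.Ioi 0) := by
  intro x (hx : 0 < x) y (hy : 0 < y) hxy
  have hθ : 1 < y / x := (one_lt_div hx).mpr hxy
  have hy_eq : y / x * x = y := div_mul_cancel₀ y hx.ne'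
  simp only [one_sub_cdf_eq_integral_Ioi h.integrable h.integral_one]
  calc x ^ γ * ∫ t in Ioi x, d t < x ^ γ * ((y / x) ^ γ * ∫ t in Ioi (y / x * x), d t) :=
        mul_lt_mul_of_pos_left (h.integral_Ioi_lt_rpow_mul hθ hx) (Real.rpow_pos_of_pos hx γ)
    _ = y ^ γ * ∫ t in Ioi y, d t := by
        rw [hy_eq, ← mul_assoc, ← Real.mul_rpow hx.le (div_pos hy hx).le, mul_comm x, hy_eq]
end

section
/- Let d be an MPT density with tail index γ and tail constant C_d, with cdf D. Then the function f(x) = 2x·d(x)/γ + 2D(x) − 1 is strictly increasing on (0, ∞). -/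
open MeasureTheory Filter

/-! The tail condition makes `d (x / θ) / d x → θ ^ (γ + 1)`; since this likelihood ratio is
strictly increasing, it stays below `θ ^ (γ + 1)`, which says exactly that
`g x = d x * x ^ (γ + 1)` is strictly increasing on `(0, ∞)`. Writing `x * d x = g x * x ^ (-γ)`
and bounding `d t ≥ g x * t ^ (-(γ + 1))` on `[x, y]` gives
`f y - f x ≥ 2 (g y - g x) y ^ (-γ) / γ > 0`. -/

lemma StrictMonoOn.lt_of_tendsto_atTop_s3 {α β : Type*} [LinearOrder α] [NoMaxOrder α]
    [LinearOrder β] [TopologicalSpace β] [OrderClosedTopology β] {F : α → β} {a : α} {L : β}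
    (hF : StrictMonoOn F (Set.Ioi a)) (hlim : Tendsto F atTop (nhds L)) {x : α}
    (hx : a < x) : F x < L := by
  have : Nonempty α := ⟨x⟩
  obtain ⟨x', hxx'⟩ := exists_gt x
  refine (hF hx (hx.trans hxx') hxx').trans_le (ge_of_tendsto hlim ?_)
  filter_upwards [eventually_ge_atTop x'] with z hz
  exact hF.monotoneOn (hx.trans hxx') (hx.trans (hxx'.trans_le hz)) hz

lemma tendsto_div_comp_div_of_tendsto_mul_rpow {d : ℝ → ℝ} {r C θ : ℝ} (hC : C ≠ 0)
    (hθ : 0 < θ) (hd : ∀ x, 0 < x → d x ≠ 0)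
    (htail : Tendsto (fun x => d x * x ^ r) atTop (nhds C)) :
    Tendsto (fun x => d (x / θ) / d x) atTop (nhds (θ ^ r)) := by
  have hscaled : Tendsto (fun x => d (x / θ) * (x / θ) ^ r) atTop (nhds C) :=
    htail.comp (tendsto_id.atTop_div_const hθ)
  have hquot := (hscaled.div htail hC).mul_const (θ ^ r)
  rw [div_self hC, one_mul] at hquot
  refine hquot.congr' ?_
  filter_upwards [eventually_gt_atTop 0] with x hx
  have := hd x hx
  have := (Real.rpow_pos_of_pos hx r).ne'
  have := (Real.rpow_pos_of_pos hθ r).ne'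
  rw [Pi.div_apply, Real.div_rpow hx.le hθ.le]
  field_simp

namespace IsMPT

variable {d : ℝ → ℝ} {γ Cd : ℝ}

theorem strictMonoOn_mul_rpow (h : IsMPT d γ Cd) :
    StrictMonoOn (fun x => d x * x ^ (γ + 1)) (Set.Ioi 0) := by
  intro u (hu : 0 < u) x (hx : 0 < x) hux
  have hθ : 1 < x / u := (one_lt_div hu).2 hux
  have hratio : d (x / (x / u)) / d x < (x / u) ^ (γ + 1) :=
    (h.mlr _ hθ).lt_of_tendsto_atTop_s3
      (tendsto_div_comp_div_of_tendsto_mul_rpow h.Cd_pos.ne' (one_pos.trans hθ)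
        (fun x hx => (h.pos x hx).ne') h.tail) hx
  rw [div_div_cancel₀ hx.ne', Real.div_rpow hx.le hu.le,
    div_lt_div_iff₀ (h.pos x hx) (Real.rpow_pos_of_pos hu _)] at hratio
  linarith

end IsMPT

lemma mul_sub_rpow_div_le_integral {d : ℝ → ℝ} {γ a x y : ℝ} (hγ : γ ≠ 0) (hx : 0 < x)
    (hxy : x ≤ y) (hd : IntervalIntegrable d volume x y)
    (hbound : ∀ t ∈ Set.Icc x y, a ≤ d t * t ^ (γ + 1)) :
    a * (x ^ (-γ) - y ^ (-γ)) / γ ≤ ∫ t in x..y, d t := by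
  have hzero : (0 : ℝ) ∉ Set.uIcc x y := by
    rw [Set.uIcc_of_le hxy]
    exact fun h0 => h0.1.not_gt hx
  have hpow : ∫ t in x..y, a * t ^ (-(γ + 1)) = a * (x ^ (-γ) - y ^ (-γ)) / γ := by
    rw [intervalIntegral.integral_const_mul,
      integral_rpow (Or.inr ⟨by contrapose! hγ; linarith, hzero⟩),
      show -(γ + 1) + 1 = -γ by ring]
    field_simp
    ring
  rw [← hpow]
  refine intervalIntegral.integral_mono_on hxy
    ((intervalIntegral.intervalIntegrable_rpow (Or.inr hzero)).const_mul a) hd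
    fun t ht => ?_
  have ht0 : 0 < t := hx.trans_le ht.1
  calc a * t ^ (-(γ + 1)) ≤ d t * t ^ (γ + 1) * t ^ (-(γ + 1)) :=
        mul_le_mul_of_nonneg_right (hbound t ht) (Real.rpow_nonneg ht0.le _)
    _ = d t := by rw [mul_assoc, ← Real.rpow_add ht0, add_neg_cancel, Real.rpow_zero, mul_one]

lemma mul_eq_mul_rpow_mul_rpow_neg {x : ℝ} (hx : 0 < x) (c γ : ℝ) :
    x * c = c * x ^ (γ + 1) * x ^ (-γ) := by
  rw [mul_assoc, ← Real.rpow_add hx, add_neg_cancel_comm, Real.rpow_one, mul_comm]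

/-- Proposition 1(4): for an MPT density `d` with cdf `D`,
`f x = 2 * x * d x / γ + 2 * D x - 1` is strictly increasing on `(0, ∞)`. -/
theorem mpt_f_strictMonoOn (d : ℝ → ℝ) (γ Cd : ℝ) (h : IsMPT d γ Cd) :
    StrictMonoOn (fun x => 2 * x * d x / γ + 2 * cdf d x - 1) (Set.Ioi 0) := by
  intro x (hx : 0 < x) y (hy : 0 < y) hxy
  have hγ := h.gamma_pos
  have hg := h.strictMonoOn_mul_rpow
  have hcdf : cdf d y - cdf d x = ∫ t in x..y, d t :=
    intervalIntegral.integral_Iic_sub_Iic h.integrable.integrableOn h.integrable.integrableOn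
  have hint := mul_sub_rpow_div_le_integral (a := d x * x ^ (γ + 1)) hγ.ne' hx hxy.le
    h.integrable.intervalIntegrable fun t ht => hg.monotoneOn hx (hx.trans_le ht.1) ht.1
  have hgap : d x * x ^ (γ + 1) * y ^ (-γ) / γ < d y * y ^ (γ + 1) * y ^ (-γ) / γ :=
    div_lt_div_of_pos_right
      (mul_lt_mul_of_pos_right (hg hx hy hxy) (Real.rpow_pos_of_pos hy _)) hγ
  have hscale : ∀ z, 0 < z → 2 * z * d z / γ = 2 * (d z * z ^ (γ + 1) * z ^ (-γ) / γ) := by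
    intro z hz
    rw [mul_assoc, mul_eq_mul_rpow_mul_rpow_neg hz (d z) γ, mul_div_assoc]
  have hsplit : d x * x ^ (γ + 1) * x ^ (-γ) / γ =
      d x * x ^ (γ + 1) * (x ^ (-γ) - y ^ (-γ)) / γ + d x * x ^ (γ + 1) * y ^ (-γ) / γ := by
    ring
  simp only [hscale x hx, hscale y hy]
  linarith
end

section
/- Under the asymptotic framework, if ω_m is a sequence of positive solutions of the Bayes oracle equation (1+u_m)^(−1/2)·d(ω·(1+u_m)^(−1/2))/d(ω) = v_m, then the type II risk component satisfies 2·D(ω_m·(1+u_m)^(−1/2)) − 1 → C_2 = 2D(√C) − 1 as m → ∞. -/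
open MeasureTheory Filter

/-! Write `N x = d x * x ^ (γ + 1)` and `θ = √(1 + u)`. For `z = ω / θ` the oracle equation says
exactly `N z / N (θ z) = v (1 + u) ^ (-γ/2)`, and the right side tends to `N √C / Cd`. The monotone
likelihood ratio makes `x ↦ N x / N (θ x)` strictly increasing; as it tends to `Cd / Cd = 1`,
`N` is strictly increasing too. At a fixed `w` the ratio tends to `N w / Cd` as `θ → ∞`, so these
comparisons squeeze `z` to `√C`; continuity of the cdf finishes. -/

open Set Topology

lemma continuous_cdf {d : ℝ → ℝ} (hd : Integrable d) : Continuous (cdf d) :=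
  continuous_iff_continuousAt.2 fun x =>
    (hd.integrableOn.continuousOn_Iic_primitive_Iic (a₀ := x + 1)).continuousAt
      (Iic_mem_nhds (lt_add_one x))

lemma tendsto_mul_one_add_rpow_neg {ι : Type*} {l : Filter ι} {u f : ι → ℝ} {a L : ℝ}
    (hu : Tendsto u l atTop) (hf : Tendsto (fun i => f i * u i ^ (-a)) l (𝓝 L)) :
    Tendsto (fun i => f i * (1 + u i) ^ (-a)) l (𝓝 L) := by
  have hratio : Tendsto (fun i => ((1 + u i) / u i) ^ (-a)) l (𝓝 1) := by
    have h : Tendsto (fun i => (u i)⁻¹ + 1) l (𝓝 (0 + 1)) :=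
      (tendsto_inv_atTop_zero.comp hu).add_const 1
    rw [zero_add] at h
    simpa using (h.rpow_const (Or.inl one_ne_zero)).congr' <| (hu.eventually_gt_atTop 0).mono
      fun i hi => by rw [add_div, div_self hi.ne', one_div, add_comm]
  refine (mul_one L ▸ hf.mul hratio).congr' ((hu.eventually_gt_atTop 0).mono fun i hi => ?_)
  rw [mul_assoc, ← Real.mul_rpow hi.le (by positivity), mul_div_cancel₀ _ hi.ne']

noncomputable def normalizedTail (d : ℝ → ℝ) (γ x : ℝ) : ℝ := d x * x ^ (γ + 1)

lemma normalizedTail_div_normalizedTail_mul {d : ℝ → ℝ} {γ θ x : ℝ} (hθ : 0 < θ) (hx : 0 < x) :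
    normalizedTail d γ x / normalizedTail d γ (θ * x) = d x / d (θ * x) / θ ^ (γ + 1) := by
  have hθγ : θ ^ (γ + 1) ≠ 0 := (Real.rpow_pos_of_pos hθ _).ne'
  have hxγ : x ^ (γ + 1) ≠ 0 := (Real.rpow_pos_of_pos hx _).ne'
  rw [normalizedTail, normalizedTail, Real.mul_rpow hθ.le hx.le]
  field_simp

namespace IsMPT

variable {d : ℝ → ℝ} {γ Cd : ℝ}

lemma normalizedTail_pos (h : IsMPT d γ Cd) {x : ℝ} (hx : 0 < x) : 0 < normalizedTail d γ x :=
  mul_pos (h.pos x hx) (Real.rpow_pos_of_pos hx _)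

lemma strictMonoOn_normalizedTail_ratio (h : IsMPT d γ Cd) {θ : ℝ} (hθ : 1 < θ) :
    StrictMonoOn (fun x => normalizedTail d γ x / normalizedTail d γ (θ * x)) (Ioi 0) := by
  have hθ0 : 0 < θ := one_pos.trans hθ
  intro x hx y hy hxy
  have hmlr := h.mlr θ hθ (mul_pos hθ0 hx) (mul_pos hθ0 hy) (by gcongr)
  simp only [mul_div_cancel_left₀ _ hθ0.ne'] at hmlr
  simp only [normalizedTail_div_normalizedTail_mul hθ0 hx,
    normalizedTail_div_normalizedTail_mul hθ0 hy]
  gcongr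

lemma normalizedTail_lt_mul (h : IsMPT d γ Cd) {θ x : ℝ} (hθ : 1 < θ) (hx : 0 < x) :
    normalizedTail d γ x < normalizedTail d γ (θ * x) := by
  have hlim :
      Tendsto (fun y => normalizedTail d γ y / normalizedTail d γ (θ * y)) atTop (𝓝 1) := by
    have := h.tail.div (h.tail.comp (tendsto_id.const_mul_atTop (one_pos.trans hθ))) h.Cd_pos.ne'
    rwa [div_self h.Cd_pos.ne'] at this
  have hmono := h.strictMonoOn_normalizedTail_ratio hθ
  have hle : normalizedTail d γ (x + 1) / normalizedTail d γ (θ * (x + 1)) ≤ 1 :=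
    ge_of_tendsto hlim <| (eventually_ge_atTop (x + 1)).mono fun y hy =>
      hmono.monotoneOn (mem_Ioi.2 (by linarith)) (mem_Ioi.2 (by linarith)) hy
  have hlt := hmono (mem_Ioi.2 hx) (mem_Ioi.2 (by linarith)) (lt_add_one x)
  rw [← div_lt_one (h.normalizedTail_pos (mul_pos (one_pos.trans hθ) hx))]
  exact hlt.trans_le hle

lemma strictMonoOn_normalizedTail (h : IsMPT d γ Cd) :
    StrictMonoOn (normalizedTail d γ) (Ioi 0) := by
  intro a ha b _ hab
  have := h.normalizedTail_lt_mul ((one_lt_div ha).2 hab) ha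
  rwa [div_mul_cancel₀ b ha.ne'] at this

lemma tendsto_of_tendsto_normalizedTail_ratio (h : IsMPT d γ Cd) {ι : Type*} {l : Filter ι}
    {θ z : ι → ℝ} (hθ : Tendsto θ l atTop) (hθ1 : ∀ i, 1 < θ i) (hz : ∀ i, 0 < z i)
    {s : ℝ} (hs : 0 < s)
    (hlim : Tendsto (fun i => normalizedTail d γ (z i) / normalizedTail d γ (θ i * z i)) l
      (𝓝 (normalizedTail d γ s / Cd))) :
    Tendsto z l (𝓝 s) := by
  have hfixed : ∀ w, 0 < w →
      Tendsto (fun i => normalizedTail d γ w / normalizedTail d γ (θ i * w)) l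
        (𝓝 (normalizedTail d γ w / Cd)) := fun w hw =>
    tendsto_const_nhds.div (h.tail.comp (hθ.atTop_mul_const hw)) h.Cd_pos.ne'
  have hcmp : ∀ {a b}, 0 < a → 0 < b → normalizedTail d γ a < normalizedTail d γ b →
      normalizedTail d γ a / Cd < normalizedTail d γ b / Cd := fun _ _ h' =>
    (div_lt_div_iff_of_pos_right h.Cd_pos).2 h'
  rw [tendsto_order]
  constructor
  · intro b hb
    obtain ⟨w, hbw, hws⟩ := exists_between (max_lt hb hs)
    have hw : 0 < w := (le_max_right b 0).trans_lt hbw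
    filter_upwards [(hfixed w hw).eventually_lt hlim
      (hcmp hw hs (h.strictMonoOn_normalizedTail hw hs hws))] with i hi
    exact (le_max_left b 0).trans_lt <| hbw.trans <|
      ((h.strictMonoOn_normalizedTail_ratio (hθ1 i)).lt_iff_lt hw (hz i)).1 hi
  · intro b hb
    obtain ⟨w, hsw, hwb⟩ := exists_between hb
    have hw : 0 < w := hs.trans hsw
    filter_upwards [hlim.eventually_lt (hfixed w hw)
      (hcmp hs hw (h.strictMonoOn_normalizedTail hs hw hsw))] with i hi
    exact (((h.strictMonoOn_normalizedTail_ratio (hθ1 i)).lt_iff_lt (hz i) hw).1 hi).trans hwb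

end IsMPT

theorem oracle_typeII_risk_general (d : ℝ → ℝ) (γ Cd : ℝ) (h : IsMPT d γ Cd)
    (C : ℝ) (hC : 0 < C)
    (u v : ℕ → ℝ) (hu : ∀ m, 0 < u m) (hu' : Tendsto u atTop atTop)
    (hvu : Tendsto (fun m => v m * u m ^ (-(γ / 2))) atTop
      (nhds (C ^ ((γ + 1) / 2) * d (Real.sqrt C) / Cd)))
    (ω : ℕ → ℝ) (hω : ∀ m, 0 < ω m)
    (hωeq : ∀ m, (1 + u m) ^ (-(1 : ℝ) / 2) * d (ω m * (1 + u m) ^ (-(1 : ℝ) / 2)) / d (ω m)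
      = v m) :
    Tendsto (fun m => 2 * cdf d (ω m * (1 + u m) ^ (-(1 : ℝ) / 2)) - 1) atTop
      (nhds (2 * cdf d (Real.sqrt C) - 1)) := by
  have hpos : ∀ m, 0 ≤ 1 + u m := fun m => by linarith [hu m]
  set θ : ℕ → ℝ := fun m => (1 + u m) ^ (1 / 2 : ℝ)
  have hθ1 : ∀ m, 1 < θ m := fun m => Real.one_lt_rpow (by linarith [hu m]) (by norm_num)
  have hθ0 : ∀ m, 0 < θ m := fun m => one_pos.trans (hθ1 m)
  have hθ : Tendsto θ atTop atTop :=
    (tendsto_rpow_atTop (by norm_num)).comp (tendsto_atTop_add_const_left _ 1 hu')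
  have hscale : ∀ m, (1 + u m) ^ (-(1 : ℝ) / 2) = (θ m)⁻¹ := fun m => by
    rw [neg_div, Real.rpow_neg (hpos m)]
  have hscale_γ : ∀ m, (1 + u m) ^ (-(γ / 2)) = (θ m ^ γ)⁻¹ := fun m => by
    rw [← Real.rpow_mul (hpos m), ← Real.rpow_neg (hpos m)]
    ring_nf
  have hratio : ∀ m, normalizedTail d γ (ω m / θ m) / normalizedTail d γ (θ m * (ω m / θ m))
      = v m * (1 + u m) ^ (-(γ / 2)) := fun m => by
    rw [normalizedTail_div_normalizedTail_mul (hθ0 m) (div_pos (hω m) (hθ0 m)),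
      mul_div_cancel₀ _ (hθ0 m).ne', ← hωeq m, hscale, hscale_γ, Real.rpow_add_one (hθ0 m).ne',
      div_eq_mul_inv (ω m)]
    have := (hθ0 m).ne'
    have := (Real.rpow_pos_of_pos (hθ0 m) γ).ne'
    field_simp
  have hlimit : C ^ ((γ + 1) / 2) * d (Real.sqrt C) = normalizedTail d γ (Real.sqrt C) := by
    rw [normalizedTail, Real.sqrt_eq_rpow, ← Real.rpow_mul hC.le, mul_comm]
    ring_nf
  have hz : Tendsto (fun m => ω m / θ m) atTop (𝓝 (Real.sqrt C)) :=
    h.tendsto_of_tendsto_normalizedTail_ratio hθ hθ1 (fun m => div_pos (hω m) (hθ0 m))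
      (Real.sqrt_pos.2 hC)
      (by simpa only [hratio, hlimit] using tendsto_mul_one_add_rpow_neg hu' hvu)
  have hz' : Tendsto (fun m => ω m * (1 + u m) ^ (-(1 : ℝ) / 2)) atTop (𝓝 (Real.sqrt C)) :=
    hz.congr fun m => by rw [hscale, div_eq_mul_inv]
  exact ((((continuous_cdf h.integrable).tendsto _).comp hz').const_mul 2).sub_const 1

/-- Proposition 2 (type II risk component): under the asymptotic framework, if `ω_m` solves the
Bayes oracle equation, then `2 * D (ω_m * (1 + u_m) ^ (-1/2)) - 1 → C₂ = 2 * D (√C) - 1`. -/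
theorem oracle_typeII_risk (d : ℝ → ℝ) (γ Cd : ℝ) (h : IsMPT d γ Cd)
    (heven : ∀ x, d (-x) = d x) (hcont : ContinuousOn d (Set.Ioi 0))
    (C : ℝ) (hC : 0 < C)
    (u v : ℕ → ℝ) (hu : ∀ m, 0 < u m) (hu' : Tendsto u atTop atTop)
    (hv : ∀ m, 0 < v m)
    (hvu : Tendsto (fun m => v m * u m ^ (-(γ / 2))) atTop
      (nhds (C ^ ((γ + 1) / 2) * d (Real.sqrt C) / Cd)))
    (ω : ℕ → ℝ) (hω : ∀ m, 0 < ω m)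
    (hωeq : ∀ m, (1 + u m) ^ (-(1 : ℝ) / 2) * d (ω m * (1 + u m) ^ (-(1 : ℝ) / 2)) / d (ω m)
      = v m) :
    Tendsto (fun m => 2 * cdf d (ω m * (1 + u m) ^ (-(1 : ℝ) / 2)) - 1) atTop
      (nhds (2 * cdf d (Real.sqrt C) - 1)) :=
  oracle_typeII_risk_general d γ Cd h C hC u v hu hu' hvu ω hω hωeq
end
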